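/- arXiv:2406.19242 — 6 statements merged into one kernel-verified Lean document; each statement's English description precedes it below -/
import Mathlib

section
/- Let U, V₁, …, Vₙ be independent uniform random variables on (0,1), γ ∈ (0,1), and Uᵢ^γ = γ Vᵢ 1_{U≤γ} + U 1_{U>γ} for i = 1,…,n. Then for every a ∈ (0,1)ⁿ: if aᵢ > γ for all i, then P(U^γ ≤ a) = min_i aᵢ; and if a_k ≤ γ for some k, then P(U^γ ≤ a) = γ ∏ᵢ (aᵢ ∧ γ)/γ. -/
open MeasureTheory

lemma meas_Iic_unif_aux {Ω : Type*} [MeasurableSpace Ω] {P : Measure Ω} {f : Ω → ℝ}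
    (hf : Measurable f) (hunif : P.map f = volume.restrict (Set.Ioo (0 : ℝ) 1))
    {t : ℝ} : P {ω | f ω ≤ t} = ENNReal.ofReal (min t 1) := by
  have h1 : {ω | f ω ≤ t} = f ⁻¹' Set.Iic t := rfl
  rw [h1, ← Measure.map_apply hf measurableSet_Iic, hunif,
    Measure.restrict_apply measurableSet_Iic]
  rcases le_or_gt 1 t with h | h
  · have h2 : Set.Iic t ∩ Set.Ioo (0:ℝ) 1 = Set.Ioo 0 1 := by
      ext x
      simp only [Set.mem_inter_iff, Set.mem_Iic, Set.mem_Ioo, and_iff_right_iff_imp]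
      rintro ⟨h0, h1'⟩; linarith
    rw [h2, Real.volume_Ioo, min_eq_right h]; norm_num
  · have h2 : Set.Iic t ∩ Set.Ioo (0:ℝ) 1 = Set.Ioc 0 t := by
      ext x
      constructor
      · rintro ⟨hx, h0, _⟩; exact ⟨h0, hx⟩
      · rintro ⟨h0, hx⟩; exact ⟨hx, h0, lt_of_le_of_lt hx h⟩
    rw [h2, Real.volume_Ioc, min_eq_left h.le, sub_zero]

/-- The joint distribution function (copula) of the vector `U^γ`:
`P(U^γ ≤ a) = min_i a_i` if all `a_i > γ`, and
`P(U^γ ≤ a) = γ ∏ᵢ (aᵢ ∧ γ)/γ` if some `a_k ≤ γ`, for `a ∈ (0,1)ⁿ`. -/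
theorem copula_U_gamma {Ω : Type*} [MeasurableSpace Ω] (P : Measure Ω) [IsProbabilityMeasure P]
    (n : ℕ) (hn : 0 < n) (U : Ω → ℝ) (V : Fin n → Ω → ℝ)
    (hU : Measurable U) (hV : ∀ i, Measurable (V i))
    (hUunif : P.map U = volume.restrict (Set.Ioo (0 : ℝ) 1))
    (hVunif : ∀ i, P.map (V i) = volume.restrict (Set.Ioo (0 : ℝ) 1))
    (hindep : ProbabilityTheory.iIndepFun
      (Fin.cons U V : Fin (n + 1) → Ω → ℝ) P)
    (γ : ℝ) (hγ : γ ∈ Set.Ioo (0 : ℝ) 1)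
    (Uγ : Fin n → Ω → ℝ)
    (hUγ : ∀ i ω, Uγ i ω = if U ω ≤ γ then γ * V i ω else U ω)
    (a : Fin n → ℝ) (ha : ∀ i, a i ∈ Set.Ioo (0 : ℝ) 1) :
    ((∀ i, γ < a i) →
      (P {ω | ∀ i, Uγ i ω ≤ a i}).toReal = ⨅ i, a i) ∧
    ((∃ k, a k ≤ γ) →
      (P {ω | ∀ i, Uγ i ω ≤ a i}).toReal = γ * ∏ i, min (a i) γ / γ) := by
  obtain ⟨hγ0, hγ1⟩ := hγ
  haveI : Nonempty (Fin n) := ⟨⟨0, hn⟩⟩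
  set m := ⨅ i, a i with hm
  have hbdd : BddBelow (Set.range a) := (Set.finite_range a).bddBelow
  have hmle : ∀ i, m ≤ a i := fun i => ciInf_le hbdd i
  have hm1 : m < 1 := lt_of_le_of_lt (hmle ⟨0, hn⟩) (ha ⟨0, hn⟩).2
  set A : Set Ω := {ω | U ω ≤ γ} with hA
  set B : Fin n → Set Ω := fun i => {ω | V i ω ≤ a i / γ} with hB
  set C : Set Ω := {ω | γ < U ω ∧ U ω ≤ m} with hCdef
  -- decomposition of the event
  have hE : {ω | ∀ i, Uγ i ω ≤ a i} = (A ∩ ⋂ i, B i) ∪ C := by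
    ext ω
    simp only [Set.mem_setOf_eq, Set.mem_union, Set.mem_inter_iff, Set.mem_iInter,
      hA, hB, hCdef]
    by_cases h : U ω ≤ γ
    · constructor
      · intro hall
        left
        refine ⟨h, fun i => ?_⟩
        have h2 := hall i
        rw [hUγ, if_pos h] at h2
        rw [le_div_iff₀ hγ0, mul_comm]
        exact h2
      · rintro (⟨_, hb⟩ | ⟨hc, _⟩)
        · intro i
          rw [hUγ, if_pos h]
          have h2 := hb i
          rw [le_div_iff₀ hγ0, mul_comm] at h2
          exact h2
        · exact absurd h (not_le.mpr hc)
    · push_neg at h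
      constructor
      · intro hall
        right
        refine ⟨h, le_ciInf fun i => ?_⟩
        have h2 := hall i
        rwa [hUγ, if_neg (not_le.mpr h)] at h2
      · rintro (⟨hc, _⟩ | ⟨_, hc⟩)
        · exact absurd hc (not_le.mpr h)
        · intro i
          rw [hUγ, if_neg (not_le.mpr h)]
          exact le_trans hc (hmle i)
  -- measure of the union
  have hBmeas : ∀ i, MeasurableSet (B i) := fun i => (hV i) measurableSet_Iic
  have hCmeas : MeasurableSet C := (hU measurableSet_Ioc : MeasurableSet (U ⁻¹' Set.Ioc γ m))
  have hdisj : Disjoint (A ∩ ⋂ i, B i) C := by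
    rw [Set.disjoint_left]
    rintro ω ⟨hωA, _⟩ ⟨hωC, _⟩
    exact absurd hωA (not_le.mpr hωC)
  -- independence computation
  have hinter : A ∩ ⋂ i, B i = ⋂ j : Fin (n+1), (Fin.cons A B : Fin (n+1) → Set Ω) j := by
    ext ω
    simp only [Set.mem_inter_iff, Set.mem_iInter]
    rw [Fin.forall_fin_succ]
    simp only [Fin.cons_zero, Fin.cons_succ]
  have hprod : P (A ∩ ⋂ i, B i) = P A * ∏ i, P (B i) := by
    rw [hinter, hindep.meas_iInter, Fin.prod_univ_succ]
    · simp only [Fin.cons_zero, Fin.cons_succ]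
    · intro j
      induction j using Fin.cases with
      | zero =>
        exact ⟨Set.Iic γ, measurableSet_Iic, by rw [Fin.cons_zero, Fin.cons_zero]; rfl⟩
      | succ i =>
        exact ⟨Set.Iic (a i / γ), measurableSet_Iic, by rw [Fin.cons_succ, Fin.cons_succ]; rfl⟩
  -- individual probabilities
  have hPA : P A = ENNReal.ofReal γ := by
    rw [hA, meas_Iic_unif_aux hU hUunif, min_eq_left hγ1.le]
  have hminrw : ∀ i, min (a i / γ) 1 = min (a i) γ / γ := by
    intro i
    rw [← div_self (ne_of_gt hγ0), min_div_div_right hγ0.le]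
  have hPB : ∀ i, P (B i) = ENNReal.ofReal (min (a i) γ / γ) := by
    intro i
    rw [hB]
    simp only
    rw [meas_Iic_unif_aux (hV i) (hVunif i), hminrw i]
  have hPC : P C = ENNReal.ofReal (m - γ) := by
    have h1 : C = U ⁻¹' Set.Ioc γ m := rfl
    rw [h1, ← Measure.map_apply hU measurableSet_Ioc, hUunif,
      Measure.restrict_apply measurableSet_Ioc]
    have h2 : Set.Ioc γ m ∩ Set.Ioo (0:ℝ) 1 = Set.Ioc γ m := by
      rw [Set.inter_eq_left]
      rintro x ⟨h1', h2'⟩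
      exact ⟨lt_trans hγ0 h1', lt_of_le_of_lt h2' hm1⟩
    rw [h2, Real.volume_Ioc]
  have hmin_nonneg : ∀ i, (0:ℝ) ≤ min (a i) γ / γ := fun i =>
    div_nonneg (le_min (ha i).1.le hγ0.le) hγ0.le
  have hkey : P {ω | ∀ i, Uγ i ω ≤ a i} =
      ENNReal.ofReal (γ * ∏ i, min (a i) γ / γ) + ENNReal.ofReal (m - γ) := by
    rw [hE, measure_union hdisj hCmeas, hprod, hPA, hPC]
    congr 1
    rw [ENNReal.ofReal_mul hγ0.le, ENNReal.ofReal_prod_of_nonneg (fun i _ => hmin_nonneg i)]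
    congr 1
    exact Finset.prod_congr rfl fun i _ => hPB i
  constructor
  · intro hall
    have hγm : γ ≤ m := le_ciInf fun i => (hall i).le
    have hprod1 : ∏ i, min (a i) γ / γ = 1 := by
      apply Finset.prod_eq_one
      intro i _
      rw [min_eq_right (hall i).le, div_self (ne_of_gt hγ0)]
    rw [hkey, hprod1, mul_one, ← ENNReal.ofReal_add hγ0.le (by linarith)]
    rw [ENNReal.toReal_ofReal (by linarith)]
    ring
  · intro ⟨k, hk⟩
    have hmγ : m ≤ γ := le_trans (hmle k) hk
    have h0 : ENNReal.ofReal (m - γ) = 0 := ENNReal.ofReal_eq_zero.mpr (by linarith)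
    rw [hkey, h0, add_zero,
      ENNReal.toReal_ofReal (mul_nonneg hγ0.le (Finset.prod_nonneg fun i _ => hmin_nonneg i))]
end

section
/- Let U, V₁, …, Vₙ be independent uniform variables on (0,1), and for γ ∈ (0,1) let Uᵢ^γ = γVᵢ1_{U≤γ} + U1_{U>γ}. If 0 < γ₁ ≤ γ₂ < 1, then U^{γ₂} is smaller than U^{γ₁} in the lower orthant order: P(U^{γ₂} ≤ a) ≤ P(U^{γ₁} ≤ a) for all a ∈ ℝⁿ. -/
open MeasureTheory ProbabilityTheory Set

/-! Splitting on `U ≤ γ`, the event `{U^γ ≤ a}` is the disjoint union of `{U ≤ γ, V ≤ a / γ}` and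
`{γ < U ≤ m}` with `m = minᵢ aᵢ`, so by independence its probability is
`γ ∏ᵢ F(aᵢ / γ) + (min m 1 - γ)⁺`, `F` being the uniform distribution function. For `γ ≤ m` this
equals `min m 1`; for `0 ≤ m < γ` the factor of an index `j` with `aⱼ = m` cancels the `γ`, leaving
`m ∏_{i ≠ j} F(aᵢ / γ)`, which is antitone in `γ` and at most `m`. -/

noncomputable def uniformCDF (t : ℝ) : ℝ := max 0 (min t 1)

lemma uniformCDF_nonneg (t : ℝ) : 0 ≤ uniformCDF t := le_max_left _ _

lemma uniformCDF_le_one (t : ℝ) : uniformCDF t ≤ 1 := max_le zero_le_one (min_le_right _ _)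

lemma uniformCDF_mono : Monotone uniformCDF :=
  fun _ _ h => max_le_max le_rfl (min_le_min_right 1 h)

lemma uniformCDF_of_mem_Icc {t : ℝ} (ht : t ∈ Icc 0 1) : uniformCDF t = t := by
  simp [uniformCDF, ht.1, ht.2]

lemma uniformCDF_of_one_le {t : ℝ} (ht : 1 ≤ t) : uniformCDF t = 1 := by
  simp [uniformCDF, ht]

lemma uniformCDF_of_nonpos {t : ℝ} (ht : t ≤ 0) : uniformCDF t = 0 := by
  simp [uniformCDF, ht]

lemma uniform_Iic (t : ℝ) :
    volume.restrict (Ioo (0 : ℝ) 1) (Iic t) = ENNReal.ofReal (uniformCDF t) := by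
  rw [Measure.restrict_congr_set Ioo_ae_eq_Ioc, Measure.restrict_apply measurableSet_Iic,
    inter_comm, Ioc_inter_Iic, Real.volume_Ioc, uniformCDF, ENNReal.ofReal_max]
  simp [min_comm]

lemma uniform_Ioc (s t : ℝ) :
    volume.restrict (Ioo (0 : ℝ) 1) (Ioc s t) = ENNReal.ofReal (min t 1 - max s 0) := by
  rw [Measure.restrict_congr_set Ioo_ae_eq_Ioc, Measure.restrict_apply measurableSet_Ioc,
    Ioc_inter_Ioc, Real.volume_Ioc]

lemma ProbabilityTheory.iIndepFun.measure_cons_preimage_inter {Ω β : Type*} [MeasurableSpace Ω]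
    [MeasurableSpace β] {P : Measure Ω} {n : ℕ} {X : Ω → β} {Y : Fin n → Ω → β}
    (h : iIndepFun (Fin.cons X Y : Fin (n + 1) → Ω → β) P) {s : Set β} {t : Fin n → Set β}
    (hs : MeasurableSet s) (ht : ∀ i, MeasurableSet (t i)) :
    P (X ⁻¹' s ∩ ⋂ i, Y i ⁻¹' t i) = P (X ⁻¹' s) * ∏ i, P (Y i ⁻¹' t i) := by
  have hmul := h.measure_inter_preimage_eq_mul Finset.univ (sets := Fin.cons s t)
    (fun i _ => Fin.cases hs ht i)
  have hcons : ⋂ i, (Fin.cons X Y : Fin (n + 1) → Ω → β) i ⁻¹'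
      (Fin.cons s t : Fin (n + 1) → Set β) i = X ⁻¹' s ∩ ⋂ i, Y i ⁻¹' t i := by
    ext ω
    simp [Fin.forall_fin_succ]
  simpa [Fin.prod_univ_succ, hcons] using hmul

noncomputable def uGamma {Ω ι : Type*} (γ : ℝ) (U : Ω → ℝ) (V : ι → Ω → ℝ) (i : ι) (ω : Ω) : ℝ :=
  if U ω ≤ γ then γ * V i ω else U ω

lemma setOf_uGamma_le_eq {Ω ι : Type*} [Finite ι] [Nonempty ι] {γ : ℝ} (hγ : 0 < γ)
    (U : Ω → ℝ) (V : ι → Ω → ℝ) (a : ι → ℝ) :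
    {ω | ∀ i, uGamma γ U V i ω ≤ a i}
      = (U ⁻¹' Iic γ ∩ ⋂ i, V i ⁻¹' Iic (a i / γ)) ∪ U ⁻¹' Ioc γ (⨅ i, a i) := by
  ext ω
  by_cases h : U ω ≤ γ
  · simp [uGamma, h, le_div_iff₀ hγ, mul_comm]
  · simp [uGamma, h, le_ciInf_iff (Finite.bddBelow_range a), lt_of_not_ge h]

noncomputable def uGammaCDF {ι : Type*} [Fintype ι] (γ : ℝ) (a : ι → ℝ) : ℝ :=
  γ * ∏ i, uniformCDF (a i / γ) + max 0 (min (⨅ i, a i) 1 - γ)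

section uGammaCDF

variable {ι : Type*} [Fintype ι] {γ : ℝ} {a : ι → ℝ}

lemma uGammaCDF_of_iInf_nonpos {j : ι} (hj : a j = ⨅ i, a i) (hm : ⨅ i, a i ≤ 0)
    (hγ : 0 < γ) : uGammaCDF γ a = 0 := by
  have hprod : ∏ i, uniformCDF (a i / γ) = 0 :=
    Finset.prod_eq_zero (Finset.mem_univ j)
      (uniformCDF_of_nonpos (div_nonpos_of_nonpos_of_nonneg (hj ▸ hm) hγ.le))
  rw [uGammaCDF, hprod, mul_zero, zero_add, max_eq_left]
  linarith [min_le_left (⨅ i, a i) 1]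

lemma uGammaCDF_of_le_iInf [Nonempty ι] (hγ0 : 0 < γ) (hγm : γ ≤ ⨅ i, a i) (hγ1 : γ < 1) :
    uGammaCDF γ a = min (⨅ i, a i) 1 := by
  have hprod : ∏ i, uniformCDF (a i / γ) = 1 :=
    Finset.prod_eq_one fun i _ => uniformCDF_of_one_le <| (one_le_div hγ0).2 <|
      hγm.trans (ciInf_le (Finite.bddBelow_range a) i)
  rw [uGammaCDF, hprod, mul_one, max_eq_right (by simpa using ⟨hγm, hγ1.le⟩)]
  ring

lemma uGammaCDF_of_iInf_lt [DecidableEq ι] {j : ι} (hj : a j = ⨅ i, a i) (hm : 0 ≤ ⨅ i, a i)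
    (hmγ : ⨅ i, a i < γ) :
    uGammaCDF γ a = (⨅ i, a i) * ∏ i ∈ Finset.univ.erase j, uniformCDF (a i / γ) := by
  have hγ : 0 < γ := hm.trans_lt hmγ
  rw [uGammaCDF, ← Finset.mul_prod_erase _ _ (Finset.mem_univ j), hj,
    uniformCDF_of_mem_Icc ⟨div_nonneg hm hγ.le, (div_le_one hγ).2 hmγ.le⟩,
    max_eq_left (by linarith [min_le_left (⨅ i, a i) 1]), add_zero, ← mul_assoc,
    mul_div_cancel₀ _ hγ.ne']

lemma uGammaCDF_antitoneOn [Nonempty ι] (a : ι → ℝ) :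
    AntitoneOn (fun γ => uGammaCDF γ a) (Ioo 0 1) := by
  classical
  rintro γ₁ ⟨h10, h11⟩ γ₂ ⟨h20, h21⟩ h12
  obtain ⟨j, hj⟩ := exists_eq_ciInf_of_finite (f := a)
  set m := ⨅ i, a i
  dsimp only
  rcases le_or_gt m 0 with hm | hm
  · rw [uGammaCDF_of_iInf_nonpos hj hm h10, uGammaCDF_of_iInf_nonpos hj hm h20]
  rcases le_or_gt γ₁ m with h1m | h1m
  · rw [uGammaCDF_of_le_iInf h10 h1m h11]
    rcases le_or_gt γ₂ m with h2m | h2m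
    · rw [uGammaCDF_of_le_iInf h20 h2m h21]
    · rw [uGammaCDF_of_iInf_lt hj hm.le h2m]
      calc m * ∏ i ∈ Finset.univ.erase j, uniformCDF (a i / γ₂)
          ≤ m * 1 := mul_le_mul_of_nonneg_left (Finset.prod_le_one
            (fun i _ => uniformCDF_nonneg _) fun i _ => uniformCDF_le_one _) hm.le
        _ ≤ min m 1 := by rw [mul_one]; exact le_min le_rfl (by linarith)
  · rw [uGammaCDF_of_iInf_lt hj hm.le h1m, uGammaCDF_of_iInf_lt hj hm.le (h1m.trans_le h12)]
    refine mul_le_mul_of_nonneg_left (Finset.prod_le_prod (fun i _ => uniformCDF_nonneg _)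
      fun i _ => uniformCDF_mono ?_) hm.le
    exact div_le_div_of_nonneg_left (hm.le.trans (ciInf_le (Finite.bddBelow_range a) i)) h10 h12

end uGammaCDF

lemma measure_uGamma_le {Ω : Type*} [MeasurableSpace Ω] {P : Measure Ω} {n : ℕ}
    [NeZero n] {U : Ω → ℝ} {V : Fin n → Ω → ℝ} (hU : Measurable U) (hV : ∀ i, Measurable (V i))
    (hUunif : P.map U = volume.restrict (Ioo (0 : ℝ) 1))
    (hVunif : ∀ i, P.map (V i) = volume.restrict (Ioo (0 : ℝ) 1))
    (hindep : iIndepFun (Fin.cons U V : Fin (n + 1) → Ω → ℝ) P)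
    {γ : ℝ} (hγ0 : 0 < γ) (hγ1 : γ < 1) (a : Fin n → ℝ) :
    P {ω | ∀ i, uGamma γ U V i ω ≤ a i} = ENNReal.ofReal (uGammaCDF γ a) := by
  have hdisj : Disjoint (U ⁻¹' Iic γ ∩ ⋂ i, V i ⁻¹' Iic (a i / γ)) (U ⁻¹' Ioc γ (⨅ i, a i)) :=
    disjoint_left.2 fun _ hA hB => (not_lt_of_ge hA.1) hB.1
  rw [setOf_uGamma_le_eq hγ0, measure_union hdisj (hU measurableSet_Ioc),
    hindep.measure_cons_preimage_inter measurableSet_Iic fun _ => measurableSet_Iic,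
    ← Measure.map_apply hU measurableSet_Iic, ← Measure.map_apply hU measurableSet_Ioc, hUunif,
    uniform_Iic, uniform_Ioc, uniformCDF_of_mem_Icc ⟨hγ0.le, hγ1.le⟩, max_eq_left hγ0.le]
  simp_rw [← Measure.map_apply (hV _) measurableSet_Iic, hVunif, uniform_Iic]
  rw [uGammaCDF, ← ENNReal.ofReal_prod_of_nonneg fun i _ => uniformCDF_nonneg _,
    ← ENNReal.ofReal_mul hγ0.le, ENNReal.ofReal_add
      (mul_nonneg hγ0.le (Finset.prod_nonneg fun i _ => uniformCDF_nonneg _)) (le_max_left _ _),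
    ENNReal.ofReal_max, ENNReal.ofReal_zero, zero_max]

theorem U_gamma_lowerOrthant_general {Ω : Type*} [MeasurableSpace Ω] (P : Measure Ω)
    (n : ℕ) (U : Ω → ℝ) (V : Fin n → Ω → ℝ)
    (hU : Measurable U) (hV : ∀ i, Measurable (V i))
    (hUunif : P.map U = volume.restrict (Set.Ioo (0 : ℝ) 1))
    (hVunif : ∀ i, P.map (V i) = volume.restrict (Set.Ioo (0 : ℝ) 1))
    (hindep : ProbabilityTheory.iIndepFun
      (Fin.cons U V : Fin (n + 1) → Ω → ℝ) P)
    (γ₁ γ₂ : ℝ) (h1 : 0 < γ₁) (h12 : γ₁ ≤ γ₂) (h2 : γ₂ < 1)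
    (Uγ₁ Uγ₂ : Fin n → Ω → ℝ)
    (hUγ₁ : ∀ i ω, Uγ₁ i ω = if U ω ≤ γ₁ then γ₁ * V i ω else U ω)
    (hUγ₂ : ∀ i ω, Uγ₂ i ω = if U ω ≤ γ₂ then γ₂ * V i ω else U ω) :
    ∀ a : Fin n → ℝ,
      P {ω | ∀ i, Uγ₂ i ω ≤ a i} ≤ P {ω | ∀ i, Uγ₁ i ω ≤ a i} := by
  intro a
  obtain rfl | hn := eq_or_ne n 0
  · simp
  have : NeZero n := ⟨hn⟩
  obtain rfl : Uγ₁ = uGamma γ₁ U V := funext₂ hUγ₁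
  obtain rfl : Uγ₂ = uGamma γ₂ U V := funext₂ hUγ₂
  have hγ₁ : γ₁ ∈ Ioo 0 1 := ⟨h1, h12.trans_lt h2⟩
  have hγ₂ : γ₂ ∈ Ioo 0 1 := ⟨h1.trans_le h12, h2⟩
  rw [measure_uGamma_le hU hV hUunif hVunif hindep hγ₁.1 hγ₁.2,
    measure_uGamma_le hU hV hUunif hVunif hindep hγ₂.1 hγ₂.2]
  exact ENNReal.ofReal_le_ofReal (uGammaCDF_antitoneOn a hγ₁ hγ₂ h12)

/-- If `0 < γ₁ ≤ γ₂ < 1`, then `U^{γ₂}` is smaller than `U^{γ₁}` in the lower orthant order. -/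
theorem U_gamma_lowerOrthant {Ω : Type*} [MeasurableSpace Ω] (P : Measure Ω)
    [IsProbabilityMeasure P]
    (n : ℕ) (U : Ω → ℝ) (V : Fin n → Ω → ℝ)
    (hU : Measurable U) (hV : ∀ i, Measurable (V i))
    (hUunif : P.map U = volume.restrict (Set.Ioo (0 : ℝ) 1))
    (hVunif : ∀ i, P.map (V i) = volume.restrict (Set.Ioo (0 : ℝ) 1))
    (hindep : ProbabilityTheory.iIndepFun
      (Fin.cons U V : Fin (n + 1) → Ω → ℝ) P)
    (γ₁ γ₂ : ℝ) (h1 : 0 < γ₁) (h12 : γ₁ ≤ γ₂) (h2 : γ₂ < 1)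
    (Uγ₁ Uγ₂ : Fin n → Ω → ℝ)
    (hUγ₁ : ∀ i ω, Uγ₁ i ω = if U ω ≤ γ₁ then γ₁ * V i ω else U ω)
    (hUγ₂ : ∀ i ω, Uγ₂ i ω = if U ω ≤ γ₂ then γ₂ * V i ω else U ω) :
    ∀ a : Fin n → ℝ,
      P {ω | ∀ i, Uγ₂ i ω ≤ a i} ≤ P {ω | ∀ i, Uγ₁ i ω ≤ a i} :=
  U_gamma_lowerOrthant_general P n U V hU hV hUunif hVunif hindep γ₁ γ₂ h1 h12 h2 Uγ₁ Uγ₂ hUγ₁ hUγ₂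
end

section
/- Let p, γ, δ ∈ (0,1) with γ > 1−p, and let U, V_i, V_j be independent uniform random variables on (0,1). Define X_k^γ = 1_{[1−p,1)}(γ V_k 1_{U≤γ} + U 1_{U>γ}) for k ∈ {i,j}. Then X_i^γ, X_j^γ are Bernoulli(p) variables and their Pearson correlation equals ((1−p)(1−γ))/(pγ). In particular the correlation equals δ if and only if γ = 1/(1 + δ·p/(1−p)). -/
/-!
Write `T_k = γ V_k` on `{U ≤ γ}` and `T_k = U` on `{U > γ}`, so `X_k` is the indicator of
`E_k = {T_k ∈ [1-p, 1)}`. Because `1 - p ≤ γ`, this event is the disjoint union of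
`{U ≤ γ} ∩ {γ V_k ∈ [1 - p, 1)}` and `{γ < U < 1}`; the two `V`'s share the second piece. Independence
then gives `P(E_k) = γ · (γ - 1 + p)/γ + (1 - γ) = p` and
`P(E_i ∩ E_j) = (γ - 1 + p)²/γ + (1 - γ)`, and the correlation of two indicators of mean `p`,
`(P(E_i ∩ E_j) - p²)/(p (1 - p))`, simplifies to `(1 - p)(1 - γ)/(p γ)`.
-/

open MeasureTheory

noncomputable def pearson {Ω : Type*} [MeasurableSpace Ω] (P : Measure Ω)
    (X Y : Ω → ℝ) : ℝ :=
  ((∫ ω, X ω * Y ω ∂P) - (∫ ω, X ω ∂P) * (∫ ω, Y ω ∂P)) /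
    Real.sqrt (((∫ ω, X ω ^ 2 ∂P) - (∫ ω, X ω ∂P) ^ 2) *
      ((∫ ω, Y ω ^ 2 ∂P) - (∫ ω, Y ω ∂P) ^ 2))

open ProbabilityTheory Set

section Pearson

variable {Ω : Type*} [MeasurableSpace Ω] {P : Measure Ω}

theorem pearson_indicator_one {A B : Set Ω} (hA : MeasurableSet A) (hB : MeasurableSet B) :
    pearson P (A.indicator 1) (B.indicator 1) =
      (P.real (A ∩ B) - P.real A * P.real B) /
        √(P.real A * (1 - P.real A) * (P.real B * (1 - P.real B))) := by
  have hsq (C : Set Ω) : (fun ω => C.indicator (1 : Ω → ℝ) ω ^ 2) = C.indicator 1 := by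
    ext ω; rw [sq, ← Pi.mul_apply, ← inter_indicator_one, inter_self]
  have hmul : (fun ω => A.indicator (1 : Ω → ℝ) ω * B.indicator 1 ω) = (A ∩ B).indicator 1 := by
    rw [inter_indicator_one]; rfl
  simp only [pearson, hsq, hmul, integral_indicator_one hA, integral_indicator_one hB,
    integral_indicator_one (hA.inter hB)]
  ring_nf

theorem pearson_indicator_one_of_measureReal_eq {A B : Set Ω} (hA : MeasurableSet A)
    (hB : MeasurableSet B) {q : ℝ} (hq₀ : 0 ≤ q) (hq₁ : q ≤ 1) (hAq : P.real A = q)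
    (hBq : P.real B = q) :
    pearson P (A.indicator 1) (B.indicator 1) = (P.real (A ∩ B) - q ^ 2) / (q * (1 - q)) := by
  rw [pearson_indicator_one hA hB, hAq, hBq, Real.sqrt_mul_self (by nlinarith), sq]

end Pearson

section Uniform

variable {Ω : Type*} [MeasurableSpace Ω] {P : Measure Ω} {W : Ω → ℝ}

theorem measureReal_preimage_of_map_eq_uniform (hW : Measurable W)
    (hunif : P.map W = volume.restrict (Ioo 0 1)) {s : Set ℝ} (hs : MeasurableSet s) :
    P.real (W ⁻¹' s) = volume.real (s ∩ Ioo 0 1) := by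
  rw [measureReal_def, ← Measure.map_apply hW hs, hunif, Measure.restrict_apply hs]; rfl

theorem measureReal_preimage_Iic_of_map_eq_uniform (hW : Measurable W)
    (hunif : P.map W = volume.restrict (Ioo 0 1)) {x : ℝ} (hx₀ : 0 ≤ x) (hx₁ : x < 1) :
    P.real (W ⁻¹' Iic x) = x := by
  have hset : Iic x ∩ Ioo 0 1 = Ioc 0 x := by
    ext; simp only [mem_inter_iff, mem_Iic, mem_Ioo, mem_Ioc]; grind
  rw [measureReal_preimage_of_map_eq_uniform hW hunif measurableSet_Iic, hset,
    Real.volume_real_Ioc_of_le hx₀, sub_zero]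

theorem measureReal_preimage_Ioo_of_map_eq_uniform (hW : Measurable W)
    (hunif : P.map W = volume.restrict (Ioo 0 1)) {x : ℝ} (hx₀ : 0 ≤ x) (hx₁ : x ≤ 1) :
    P.real (W ⁻¹' Ioo x 1) = 1 - x := by
  rw [measureReal_preimage_of_map_eq_uniform hW hunif measurableSet_Ioo,
    inter_eq_left.2 (Ioo_subset_Ioo_left hx₀), Real.volume_real_Ioo_of_le hx₁]

theorem measureReal_preimage_mul_Ico_of_map_eq_uniform (hW : Measurable W)
    (hunif : P.map W = volume.restrict (Ioo 0 1)) {γ c : ℝ} (hc : 0 < c) (hcγ : c ≤ γ)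
    (hγ : γ ≤ 1) :
    P.real (W ⁻¹' ((γ * ·) ⁻¹' Ico c 1)) = (γ - c) / γ := by
  have hγ₀ : 0 < γ := hc.trans_le hcγ
  have hcγ₀ : 0 < c / γ := by positivity
  have hγ_inv : 1 ≤ 1 / γ := by rw [le_div_iff₀ hγ₀]; linarith
  have hset : Ico (c / γ) (1 / γ) ∩ Ioo 0 1 = Ico (c / γ) 1 := by
    ext; simp only [mem_inter_iff, mem_Ioo, mem_Ico]; grind
  rw [measureReal_preimage_of_map_eq_uniform hW hunif (measurableSet_Ico.preimage (by fun_prop)),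
    preimage_const_mul_Ico₀ _ _ hγ₀, hset, Real.volume_real_Ico_of_le (by rw [div_le_one hγ₀]; exact hcγ)]
  field_simp

end Uniform

section Mixture

variable {Ω : Type*}

noncomputable def mixedUniform (γ : ℝ) (U V : Ω → ℝ) (ω : Ω) : ℝ :=
  if U ω ≤ γ then γ * V ω else U ω

theorem mixedUniform_preimage_Ico {γ c : ℝ} (hcγ : c ≤ γ) (U V : Ω → ℝ) :
    mixedUniform γ U V ⁻¹' Ico c 1 =
      U ⁻¹' Iic γ ∩ V ⁻¹' ((γ * ·) ⁻¹' Ico c 1) ∪ U ⁻¹' Ioo γ 1 := by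
  ext ω
  by_cases h : U ω ≤ γ <;>
    simp only [mixedUniform, h, if_true, if_false, mem_preimage, mem_union, mem_inter_iff,
      mem_Ico, mem_Iic, mem_Ioo] <;> grind

theorem measurable_mixedUniform [MeasurableSpace Ω] {γ : ℝ} {U V : Ω → ℝ} (hU : Measurable U)
    (hV : Measurable V) : Measurable (mixedUniform γ U V) :=
  Measurable.ite (measurableSet_le hU measurable_const) (hV.const_mul γ) hU

theorem mixedUniform_preimage_Ico_inter {γ c : ℝ} (hcγ : c ≤ γ) (U V V' : Ω → ℝ) :
    mixedUniform γ U V ⁻¹' Ico c 1 ∩ mixedUniform γ U V' ⁻¹' Ico c 1 =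
      U ⁻¹' Iic γ ∩ (V ⁻¹' ((γ * ·) ⁻¹' Ico c 1) ∩ V' ⁻¹' ((γ * ·) ⁻¹' Ico c 1)) ∪
        U ⁻¹' Ioo γ 1 := by
  rw [mixedUniform_preimage_Ico hcγ, mixedUniform_preimage_Ico hcγ,
    ← inter_union_distrib_right, ← inter_inter_distrib_left]

theorem disjoint_preimage_Iic_inter_preimage_Ioo {γ : ℝ} (U : Ω → ℝ) (s : Set Ω) :
    Disjoint (U ⁻¹' Iic γ ∩ s) (U ⁻¹' Ioo γ 1) :=
  disjoint_left.2 fun _ h h' => not_lt.2 h.1 h'.1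

end Mixture

section Probability

variable {Ω : Type*} [MeasurableSpace Ω] {P : Measure Ω}

theorem ProbabilityTheory.iIndepFun.measureReal_inter_preimage_three {β : Type*}
    [MeasurableSpace β] {X Y Z : Ω → β} (h : iIndepFun ![X, Y, Z] P) {s t u : Set β}
    (hs : MeasurableSet s) (ht : MeasurableSet t) (hu : MeasurableSet u) :
    P.real (X ⁻¹' s ∩ (Y ⁻¹' t ∩ Z ⁻¹' u)) =
      P.real (X ⁻¹' s) * (P.real (Y ⁻¹' t) * P.real (Z ⁻¹' u)) := by
  have hprod := h.measure_inter_preimage_eq_mul Finset.univ (sets := ![s, t, u])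
    (fun k _ => by fin_cases k <;> assumption)
  simp only [Finset.mem_univ, iInter_true, Fin.prod_univ_three] at hprod
  simp only [measureReal_def, ← ENNReal.toReal_mul, ← mul_assoc]
  congr 1
  rw [show X ⁻¹' s ∩ (Y ⁻¹' t ∩ Z ⁻¹' u) = ⋂ i, ![X, Y, Z] i ⁻¹' ![s, t, u] i by
    ext; simp [Fin.forall_fin_succ]]
  exact hprod

variable [IsFiniteMeasure P] {U V V' : Ω → ℝ} {γ c : ℝ}

theorem measureReal_mixedUniform_preimage_Ico (hU : Measurable U) (hV : Measurable V)
    (hUunif : P.map U = volume.restrict (Ioo 0 1)) (hVunif : P.map V = volume.restrict (Ioo 0 1))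
    (hUV : IndepFun U V P) (hc : 0 < c) (hcγ : c ≤ γ) (hγ : γ < 1) :
    P.real (mixedUniform γ U V ⁻¹' Ico c 1) = 1 - c := by
  have hγ₀ : 0 < γ := hc.trans_le hcγ
  have hS : MeasurableSet ((γ * ·) ⁻¹' Ico c 1) := measurableSet_Ico.preimage (by fun_prop)
  have hindep : P.real (U ⁻¹' Iic γ ∩ V ⁻¹' ((γ * ·) ⁻¹' Ico c 1)) =
      P.real (U ⁻¹' Iic γ) * P.real (V ⁻¹' ((γ * ·) ⁻¹' Ico c 1)) := by
    simp only [measureReal_def, hUV.measure_inter_preimage_eq_mul _ _ measurableSet_Iic hS,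
      ENNReal.toReal_mul]
  rw [mixedUniform_preimage_Ico hcγ, measureReal_union
      (disjoint_preimage_Iic_inter_preimage_Ioo U _) (hU measurableSet_Ioo), hindep,
    measureReal_preimage_Iic_of_map_eq_uniform hU hUunif hγ₀.le hγ,
    measureReal_preimage_mul_Ico_of_map_eq_uniform hV hVunif hc hcγ hγ.le,
    measureReal_preimage_Ioo_of_map_eq_uniform hU hUunif hγ₀.le hγ.le]
  field_simp
  ring

theorem measureReal_mixedUniform_preimage_Ico_inter (hU : Measurable U) (hV : Measurable V)
    (hV' : Measurable V') (hUunif : P.map U = volume.restrict (Ioo 0 1))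
    (hVunif : P.map V = volume.restrict (Ioo 0 1))
    (hV'unif : P.map V' = volume.restrict (Ioo 0 1)) (hindep : iIndepFun ![U, V, V'] P)
    (hc : 0 < c) (hcγ : c ≤ γ) (hγ : γ < 1) :
    P.real (mixedUniform γ U V ⁻¹' Ico c 1 ∩ mixedUniform γ U V' ⁻¹' Ico c 1) =
      (γ - c) ^ 2 / γ + (1 - γ) := by
  have hγ₀ : 0 < γ := hc.trans_le hcγ
  have hS : MeasurableSet ((γ * ·) ⁻¹' Ico c 1) := measurableSet_Ico.preimage (by fun_prop)
  rw [mixedUniform_preimage_Ico_inter hcγ, measureReal_union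
      (disjoint_preimage_Iic_inter_preimage_Ioo U _) (hU measurableSet_Ioo),
    hindep.measureReal_inter_preimage_three measurableSet_Iic hS hS,
    measureReal_preimage_Iic_of_map_eq_uniform hU hUunif hγ₀.le hγ,
    measureReal_preimage_mul_Ico_of_map_eq_uniform hV hVunif hc hcγ hγ.le,
    measureReal_preimage_mul_Ico_of_map_eq_uniform hV' hV'unif hc hcγ hγ.le,
    measureReal_preimage_Ioo_of_map_eq_uniform hU hUunif hγ₀.le hγ.le]
  field_simp

end Probability

theorem one_sub_mul_one_sub_div_mul_eq_iff {p γ δ : ℝ} (hp₀ : p ≠ 0) (hp₁ : p ≠ 1)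
    (hγ : γ ≠ 0) :
    (1 - p) * (1 - γ) / (p * γ) = δ ↔ γ = 1 / (1 + δ * (p / (1 - p))) := by
  have hq : 1 - p ≠ 0 := sub_ne_zero.2 hp₁.symm
  rw [div_eq_iff (mul_ne_zero hp₀ hγ)]
  constructor
  · intro h
    apply eq_one_div_of_mul_eq_one_left
    field_simp
    linear_combination -h
  · intro h
    have hx : 1 + δ * (p / (1 - p)) ≠ 0 := by
      rintro hx
      rw [hx, div_zero] at h
      exact hγ h
    have hγx : γ * (1 + δ * (p / (1 - p))) = 1 := by rw [h, one_div_mul_cancel hx]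
    field_simp at hγx
    linear_combination -hγx

theorem pearson_bernoulli_general {Ω : Type*} [MeasurableSpace Ω] (P : Measure Ω)
    [IsProbabilityMeasure P]
    (p γ δ : ℝ) (hp : p ∈ Set.Ioo (0 : ℝ) 1) (hγ : γ ∈ Set.Ioo (0 : ℝ) 1)
    (hγp : 1 - p < γ)
    (U Vi Vj : Ω → ℝ)
    (hU : Measurable U) (hVi : Measurable Vi) (hVj : Measurable Vj)
    (hUunif : P.map U = volume.restrict (Set.Ioo (0 : ℝ) 1))
    (hViunif : P.map Vi = volume.restrict (Set.Ioo (0 : ℝ) 1))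
    (hVjunif : P.map Vj = volume.restrict (Set.Ioo (0 : ℝ) 1))
    (hindep : ProbabilityTheory.iIndepFun
      (![U, Vi, Vj] : Fin 3 → Ω → ℝ) P)
    (Xi Xj : Ω → ℝ)
    (hXi : ∀ ω, Xi ω = Set.indicator (Set.Ico (1 - p) 1) (fun _ => (1 : ℝ))
      (if U ω ≤ γ then γ * Vi ω else U ω))
    (hXj : ∀ ω, Xj ω = Set.indicator (Set.Ico (1 - p) 1) (fun _ => (1 : ℝ))
      (if U ω ≤ γ then γ * Vj ω else U ω)) :
    (P {ω | Xi ω = 1}).toReal = p ∧ (P {ω | Xj ω = 1}).toReal = p ∧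
    pearson P Xi Xj = (1 - p) * (1 - γ) / (p * γ) ∧
    (pearson P Xi Xj = δ ↔ γ = 1 / (1 + δ * (p / (1 - p)))) := by
  obtain ⟨hp₀, hp₁⟩ := hp
  obtain ⟨hγ₀, hγ₁⟩ := hγ
  have hc : 0 < 1 - p := sub_pos.2 hp₁
  set Ei := mixedUniform γ U Vi ⁻¹' Ico (1 - p) 1
  set Ej := mixedUniform γ U Vj ⁻¹' Ico (1 - p) 1
  have hXi' : Xi = Ei.indicator 1 := funext fun ω => (hXi ω).trans (indicator_comp_right _).symm
  have hXj' : Xj = Ej.indicator 1 := funext fun ω => (hXj ω).trans (indicator_comp_right _).symm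
  have hPEi : P.real Ei = p := by
    rw [measureReal_mixedUniform_preimage_Ico hU hVi hUunif hViunif
      (hindep.indepFun (by decide : (0 : Fin 3) ≠ 1)) hc hγp.le hγ₁, sub_sub_cancel]
  have hPEj : P.real Ej = p := by
    rw [measureReal_mixedUniform_preimage_Ico hU hVj hUunif hVjunif
      (hindep.indepFun (by decide : (0 : Fin 3) ≠ 2)) hc hγp.le hγ₁, sub_sub_cancel]
  have hpearson : pearson P Xi Xj = (1 - p) * (1 - γ) / (p * γ) := by
    rw [hXi', hXj', pearson_indicator_one_of_measureReal_eq
        (measurable_mixedUniform hU hVi measurableSet_Ico)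
        (measurable_mixedUniform hU hVj measurableSet_Ico) hp₀.le hp₁.le hPEi hPEj,
      measureReal_mixedUniform_preimage_Ico_inter hU hVi hVj hUunif hViunif hVjunif hindep hc
        hγp.le hγ₁]
    field_simp
    ring
  refine ⟨?_, ?_, hpearson, ?_⟩
  · simp only [hXi', indicator_eq_one_iff_mem, ofPred_mem_eq]
    exact hPEi
  · simp only [hXj', indicator_eq_one_iff_mem, ofPred_mem_eq]
    exact hPEj
  · rw [hpearson]
    exact one_sub_mul_one_sub_div_mul_eq_iff hp₀.ne' hp₁.ne hγ₀.ne'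

/-- For Bernoulli marginals `B(1,p)` (quantile function `1_{[1−p,1)}`), the variables
`X_k^γ` are Bernoulli(p) and their Pearson correlation equals `((1−p)(1−γ))/(pγ)`;
it equals `δ` iff `γ = 1/(1 + δ p/(1−p))`. -/
theorem pearson_bernoulli {Ω : Type*} [MeasurableSpace Ω] (P : Measure Ω)
    [IsProbabilityMeasure P]
    (p γ δ : ℝ) (hp : p ∈ Set.Ioo (0 : ℝ) 1) (hγ : γ ∈ Set.Ioo (0 : ℝ) 1)
    (hδ : δ ∈ Set.Ioo (0 : ℝ) 1) (hγp : 1 - p < γ)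
    (U Vi Vj : Ω → ℝ)
    (hU : Measurable U) (hVi : Measurable Vi) (hVj : Measurable Vj)
    (hUunif : P.map U = volume.restrict (Set.Ioo (0 : ℝ) 1))
    (hViunif : P.map Vi = volume.restrict (Set.Ioo (0 : ℝ) 1))
    (hVjunif : P.map Vj = volume.restrict (Set.Ioo (0 : ℝ) 1))
    (hindep : ProbabilityTheory.iIndepFun
      (![U, Vi, Vj] : Fin 3 → Ω → ℝ) P)
    (Xi Xj : Ω → ℝ)
    (hXi : ∀ ω, Xi ω = Set.indicator (Set.Ico (1 - p) 1) (fun _ => (1 : ℝ))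
      (if U ω ≤ γ then γ * Vi ω else U ω))
    (hXj : ∀ ω, Xj ω = Set.indicator (Set.Ico (1 - p) 1) (fun _ => (1 : ℝ))
      (if U ω ≤ γ then γ * Vj ω else U ω)) :
    (P {ω | Xi ω = 1}).toReal = p ∧ (P {ω | Xj ω = 1}).toReal = p ∧
    pearson P Xi Xj = (1 - p) * (1 - γ) / (p * γ) ∧
    (pearson P Xi Xj = δ ↔ γ = 1 / (1 + δ * (p / (1 - p)))) :=
  pearson_bernoulli_general P p γ δ hp hγ hγp U Vi Vj hU hVi hVj hUunif hViunif hVjunif hindep Xi Xj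
    hXi hXj
end

section
/- Let μ be the exponential distribution with rate λ > 0 and γ ∈ (0,1). Let U, V_i, V_j be independent uniform variables on (0,1) and X_k^γ = F⁻¹_μ(γV_k 1_{U≤γ} + U 1_{U>γ}) for k ∈ {i,j}, where F⁻¹_μ(u) = −ln(1−u)/λ. Then the Pearson correlation of X_i^γ and X_j^γ equals (1−γ)·(1 + (ln(1−γ))²/γ), independently of λ. -/
/-!
Write `W_k = γ V_k` on `{U ≤ γ}` and `W_k = U` on `{U > γ}`, so that `X_k = F⁻¹(W_k)`. Each `W_k`
is again uniform on `(0,1)`: on `{U ≤ γ}`, an event of probability `γ`, it is uniform on `(0,γ)`,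
and on `{U > γ}` it equals `U`. Hence `X_i` and `X_j` have the mean `1/λ` and variance `1/λ²` of
`Exp(λ)`. For the mixed moment, on `{U ≤ γ}` the factors `F⁻¹(γV_i)` and `F⁻¹(γV_j)` are
independent, while on `{U > γ}` we have `X_i = X_j`; with `q(u) = -ln(1-u)` this gives
`λ² E[X_i X_j] = (1/γ)(∫₀^γ q)² + ∫_γ^1 q²`, which the closed forms of `∫ ln` and `∫ ln²` evaluate.
-/

open MeasureTheory

open ProbabilityTheory Set Real

lemma pearson_eq_of_moments {Ω : Type*} [MeasurableSpace Ω] {P : Measure Ω} {X Y : Ω → ℝ}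
    {m s c : ℝ} (hX : ∫ ω, X ω ∂P = m) (hY : ∫ ω, Y ω ∂P = m) (hX2 : ∫ ω, X ω ^ 2 ∂P = s)
    (hY2 : ∫ ω, Y ω ^ 2 ∂P = s) (hXY : ∫ ω, X ω * Y ω ∂P = c) (hvar : m ^ 2 ≤ s) :
    pearson P X Y = (c - m ^ 2) / (s - m ^ 2) := by
  rw [pearson, hX, hY, hX2, hY2, hXY, Real.sqrt_mul_self (sub_nonneg.2 hvar), sq]

lemma hasDerivAt_log_sq_antideriv {x : ℝ} (hx : x ≠ 0) :
    HasDerivAt (fun x => x * log x ^ 2 - 2 * (x * log x) + 2 * x) (log x ^ 2) x := by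
  have h := (((hasDerivAt_id' x).fun_mul ((hasDerivAt_log hx).fun_pow 2)).fun_sub
    ((hasDerivAt_mul_log hx).const_mul 2)).fun_add ((hasDerivAt_id' x).const_mul 2)
  refine h.congr_deriv ?_
  field_simp
  ring

lemma continuousOn_log_sq_antideriv :
    ContinuousOn (fun x => x * log x ^ 2 - 2 * (x * log x) + 2 * x) (Ici 0) := by
  -- `x log² x = 4 (√x log √x)²` on `[0, ∞)`, and `y ↦ y log y` is continuous at `0`
  have h : Continuous fun x => 4 * (√x * log √x) ^ 2 - 2 * (x * log x) + 2 * x := by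
    fun_prop
  refine h.continuousOn.congr fun x (hx : 0 ≤ x) => ?_
  dsimp only
  rw [log_sqrt hx, mul_pow, sq_sqrt hx]
  ring

lemma intervalIntegrable_log_sq {c : ℝ} (hc : 0 ≤ c) :
    IntervalIntegrable (fun x => log x ^ 2) volume 0 c :=
  (intervalIntegrable_iff_integrableOn_Ioc_of_le hc).2 <|
    intervalIntegral.integrableOn_deriv_of_nonneg
      (continuousOn_log_sq_antideriv.mono Icc_subset_Ici_self)
      (fun _ hx => hasDerivAt_log_sq_antideriv hx.1.ne') (fun _ _ => sq_nonneg _)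

lemma integral_log_sq_from_zero {c : ℝ} (hc : 0 ≤ c) :
    ∫ x in 0..c, log x ^ 2 = c * log c ^ 2 - 2 * (c * log c) + 2 * c := by
  rw [intervalIntegral.integral_eq_sub_of_hasDerivAt_of_le hc
    (continuousOn_log_sq_antideriv.mono Icc_subset_Ici_self)
    (fun _ hx => hasDerivAt_log_sq_antideriv hx.1.ne') (intervalIntegrable_log_sq hc)]
  simp

lemma integral_prod_ite_mem_fst {α β : Type*} [MeasurableSpace α] [MeasurableSpace β]
    {ν : Measure α} [IsFiniteMeasure ν] {μ : Measure β} [IsProbabilityMeasure μ]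
    {s : Set α} [DecidablePred (· ∈ s)] (hs : MeasurableSet s) {f : β → ℝ} {g : α → ℝ}
    (hf : Integrable f μ) (hg : IntegrableOn g sᶜ ν) :
    ∫ z, (if z.1 ∈ s then f z.2 else g z.1) ∂(ν.prod μ)
      = ν.real s * ∫ y, f y ∂μ + ∫ x in sᶜ, g x ∂ν := by
  have hsplit : (fun z : α × β => if z.1 ∈ s then f z.2 else g z.1)
      = fun z => s.indicator 1 z.1 * f z.2 + sᶜ.indicator g z.1 := by
    ext z
    by_cases hz : z.1 ∈ s <;> simp [hz]
  have hind : Integrable (s.indicator (1 : α → ℝ)) ν :=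
    (integrable_indicator_iff hs).2 (integrable_const 1).integrableOn
  have hgc : Integrable (sᶜ.indicator g) ν := (integrable_indicator_iff hs.compl).2 hg
  rw [hsplit, integral_add (hind.mul_prod hf) (hgc.comp_fst μ), integral_prod_mul,
    integral_fun_fst, integral_indicator hs, integral_indicator hs.compl]
  simp

noncomputable abbrev uniform01 : Measure ℝ := volume.restrict (Ioo 0 1)

instance : IsProbabilityMeasure uniform01 := ⟨by simp⟩

lemma integrable_uniform01_iff {g : ℝ → ℝ} :
    Integrable g uniform01 ↔ IntervalIntegrable g volume 0 1 :=
  (intervalIntegrable_iff_integrableOn_Ioo_of_le zero_le_one).symm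

lemma MeasureTheory.Integrable.intervalIntegrable_of_uniform01 {g : ℝ → ℝ}
    (hg : Integrable g uniform01) {a b : ℝ} (ha : 0 ≤ a) (hab : a ≤ b) (hb : b ≤ 1) :
    IntervalIntegrable g volume a b :=
  (integrable_uniform01_iff.1 hg).mono_set <| by
    rw [uIcc_of_le zero_le_one, uIcc_of_le hab]
    exact Icc_subset_Icc ha hb

lemma integral_uniform01 (g : ℝ → ℝ) : ∫ u, g u ∂uniform01 = ∫ u in 0..1, g u := by
  rw [intervalIntegral.integral_of_le zero_le_one, integral_Ioc_eq_integral_Ioo]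

lemma setIntegral_uniform01_Ioi (g : ℝ → ℝ) {γ : ℝ} (h0 : 0 ≤ γ) (h1 : γ ≤ 1) :
    ∫ u in Ioi γ, g u ∂uniform01 = ∫ u in γ..1, g u := by
  rw [Measure.restrict_restrict measurableSet_Ioi, Ioi_inter_Ioo, max_eq_left h0,
    intervalIntegral.integral_of_le h1, integral_Ioc_eq_integral_Ioo]

lemma measureReal_uniform01_Iic {γ : ℝ} (h0 : 0 ≤ γ) (h1 : γ < 1) :
    uniform01.real (Iic γ) = γ := by
  have hset : Iic γ ∩ Ioo 0 1 = Ioc 0 γ := by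
    ext u
    simp only [mem_inter_iff, mem_Iic, mem_Ioo, mem_Ioc]
    constructor
    · rintro ⟨hu, hu0, -⟩
      exact ⟨hu0, hu⟩
    · rintro ⟨hu0, hu⟩
      exact ⟨hu, hu0, hu.trans_lt h1⟩
  rw [measureReal_restrict_apply measurableSet_Iic, hset]
  simp [h0]

lemma integral_uniform01_comp_mul_left (g : ℝ → ℝ) {γ : ℝ} (hγ : γ ≠ 0) :
    ∫ v, g (γ * v) ∂uniform01 = γ⁻¹ * ∫ u in 0..γ, g u := by
  rw [integral_uniform01, intervalIntegral.integral_comp_mul_left _ hγ, mul_zero, mul_one,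
    smul_eq_mul]

lemma MeasureTheory.Integrable.uniform01_comp_mul_left {g : ℝ → ℝ}
    (hg : Integrable g uniform01) {γ : ℝ} (h0 : 0 < γ) (h1 : γ ≤ 1) :
    Integrable (fun v => g (γ * v)) uniform01 := by
  rw [integrable_uniform01_iff]
  simpa [h0.ne'] using (hg.intervalIntegrable_of_uniform01 le_rfl h0.le h1).comp_mul_left (c := γ)

noncomputable def resampleBelow (γ u v : ℝ) : ℝ := if u ≤ γ then γ * v else u

lemma measurable_resampleBelow (γ : ℝ) :
    Measurable fun z : ℝ × ℝ => resampleBelow γ z.1 z.2 :=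
  Measurable.ite (measurableSet_le measurable_fst measurable_const)
    (measurable_const.mul measurable_snd) measurable_fst

section resampleBelow

variable {γ : ℝ} (h0 : 0 < γ) (h1 : γ < 1)
include h0 h1

lemma integral_prod_ite_le_fst {β : Type*} [MeasurableSpace β] {μ : Measure β}
    [IsProbabilityMeasure μ] {f : β → ℝ} {g : ℝ → ℝ} (hf : Integrable f μ)
    (hg : Integrable g uniform01) :
    ∫ z, (if z.1 ≤ γ then f z.2 else g z.1) ∂(uniform01.prod μ)
      = γ * ∫ y, f y ∂μ + ∫ u in γ..1, g u := by
  have h := integral_prod_ite_mem_fst (s := Iic γ) measurableSet_Iic hf hg.integrableOn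
  simp only [mem_Iic, compl_Iic] at h
  rw [h, setIntegral_uniform01_Ioi g h0.le h1.le, measureReal_uniform01_Iic h0.le h1]

lemma integral_prod_resampleBelow {g : ℝ → ℝ} (hg : Integrable g uniform01) :
    ∫ z, g (resampleBelow γ z.1 z.2) ∂(uniform01.prod uniform01) = ∫ u, g u ∂uniform01 := by
  simp only [resampleBelow, apply_ite g]
  rw [integral_prod_ite_le_fst h0 h1 (hg.uniform01_comp_mul_left h0 h1.le) hg,
    integral_uniform01_comp_mul_left g h0.ne', mul_inv_cancel_left₀ h0.ne', integral_uniform01,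
    intervalIntegral.integral_add_adjacent_intervals
      (hg.intervalIntegrable_of_uniform01 le_rfl h0.le h1.le)
      (hg.intervalIntegrable_of_uniform01 h0.le h1.le le_rfl)]

lemma integral_prod_resampleBelow_mul {f : ℝ → ℝ} (hf : Integrable f uniform01)
    (hf2 : Integrable (fun u => f u ^ 2) uniform01) :
    ∫ z, f (resampleBelow γ z.1 z.2.1) * f (resampleBelow γ z.1 z.2.2)
        ∂(uniform01.prod (uniform01.prod uniform01))
      = γ * (∫ v, f (γ * v) ∂uniform01) ^ 2 + ∫ u in γ..1, f u ^ 2 := by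
  have hfγ := hf.uniform01_comp_mul_left h0 h1.le
  have hite : ∀ z : ℝ × ℝ × ℝ, f (resampleBelow γ z.1 z.2.1) * f (resampleBelow γ z.1 z.2.2)
      = if z.1 ≤ γ then f (γ * z.2.1) * f (γ * z.2.2) else f z.1 ^ 2 := by
    intro z
    by_cases hz : z.1 ≤ γ <;> simp [resampleBelow, hz, sq]
  simp_rw [hite]
  rw [integral_prod_ite_le_fst h0 h1 (hfγ.mul_prod hfγ) hf2,
    integral_prod_mul (fun v => f (γ * v)) (fun v => f (γ * v)), sq]

end resampleBelow

section law

variable {Ω : Type*} [MeasurableSpace Ω] {P : Measure Ω} {U V Vi Vj : Ω → ℝ}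
  {γ : ℝ} (h0 : 0 < γ) (h1 : γ < 1)
include h0 h1

lemma integral_comp_resampleBelow (hU : Measurable U) (hV : Measurable V)
    (hlaw : P.map (fun ω => (U ω, V ω)) = uniform01.prod uniform01)
    {g : ℝ → ℝ} (hgm : Measurable g) (hg : Integrable g uniform01) :
    ∫ ω, g (resampleBelow γ (U ω) (V ω)) ∂P = ∫ u, g u ∂uniform01 := by
  have hm : Measurable fun z : ℝ × ℝ => g (resampleBelow γ z.1 z.2) :=
    hgm.comp (measurable_resampleBelow γ)
  rw [← integral_prod_resampleBelow h0 h1 hg, ← hlaw,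
    integral_map (hU.aemeasurable.prodMk hV.aemeasurable) hm.aestronglyMeasurable]

lemma integral_mul_comp_resampleBelow (hU : Measurable U) (hVi : Measurable Vi)
    (hVj : Measurable Vj)
    (hlaw : P.map (fun ω => (U ω, (Vi ω, Vj ω))) = uniform01.prod (uniform01.prod uniform01))
    {f : ℝ → ℝ} (hfm : Measurable f) (hf : Integrable f uniform01)
    (hf2 : Integrable (fun u => f u ^ 2) uniform01) :
    ∫ ω, f (resampleBelow γ (U ω) (Vi ω)) * f (resampleBelow γ (U ω) (Vj ω)) ∂P
      = γ * (∫ v, f (γ * v) ∂uniform01) ^ 2 + ∫ u in γ..1, f u ^ 2 := by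
  have hm : Measurable fun z : ℝ × ℝ × ℝ =>
      f (resampleBelow γ z.1 z.2.1) * f (resampleBelow γ z.1 z.2.2) :=
    (hfm.comp ((measurable_resampleBelow γ).comp (measurable_fst.prodMk
      (measurable_fst.comp measurable_snd)))).mul
    (hfm.comp ((measurable_resampleBelow γ).comp (measurable_fst.prodMk
      (measurable_snd.comp measurable_snd))))
  rw [← integral_prod_resampleBelow_mul h0 h1 hf hf2, ← hlaw,
    integral_map (hU.aemeasurable.prodMk (hVi.aemeasurable.prodMk hVj.aemeasurable))
      hm.aestronglyMeasurable]

end law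

noncomputable def expQuantile (u : ℝ) : ℝ := -log (1 - u)

lemma measurable_expQuantile : Measurable expQuantile :=
  (measurable_log.comp (measurable_const.sub measurable_id)).neg

lemma intervalIntegral_expQuantile (a b : ℝ) :
    ∫ u in a..b, expQuantile u = -∫ s in (1 - b)..(1 - a), log s := by
  simp only [expQuantile, intervalIntegral.integral_neg,
    intervalIntegral.integral_comp_sub_left (fun s => log s) 1]

lemma intervalIntegral_expQuantile_sq (a b : ℝ) :
    ∫ u in a..b, expQuantile u ^ 2 = ∫ s in (1 - b)..(1 - a), log s ^ 2 := by
  simp only [expQuantile, neg_sq, intervalIntegral.integral_comp_sub_left (fun s => log s ^ 2) 1]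

lemma integrable_expQuantile : Integrable expQuantile uniform01 :=
  integrable_uniform01_iff.2 <| by
    have h := ((intervalIntegral.intervalIntegrable_log' (a := 0) (b := 1)).comp_sub_left 1).symm
    simp only [sub_zero, sub_self] at h
    exact h.neg

lemma integrable_expQuantile_sq : Integrable (fun u => expQuantile u ^ 2) uniform01 :=
  integrable_uniform01_iff.2 <| by
    simpa [expQuantile] using ((intervalIntegrable_log_sq zero_le_one).comp_sub_left 1).symm

lemma integral_expQuantile : ∫ u, expQuantile u ∂uniform01 = 1 := by
  simp [integral_uniform01, intervalIntegral_expQuantile]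

lemma integral_expQuantile_sq : ∫ u, expQuantile u ^ 2 ∂uniform01 = 2 := by
  simp [integral_uniform01, intervalIntegral_expQuantile_sq, integral_log_sq_from_zero]

lemma integral_expQuantile_comp_mul_left {γ : ℝ} (hγ : γ ≠ 0) :
    ∫ v, expQuantile (γ * v) ∂uniform01 = γ⁻¹ * (γ + (1 - γ) * log (1 - γ)) := by
  rw [integral_uniform01_comp_mul_left _ hγ, intervalIntegral_expQuantile, integral_log]
  simp only [sub_zero, log_one, mul_zero]
  ring

section exponential

variable {Ω : Type*} [MeasurableSpace Ω] {P : Measure Ω} {U V Vi Vj : Ω → ℝ}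
  {γ : ℝ} (h0 : 0 < γ) (h1 : γ < 1) (hU : Measurable U)
include h0 h1 hU

lemma integral_expQuantile_resampleBelow_div (hV : Measurable V)
    (hlaw : P.map (fun ω => (U ω, V ω)) = uniform01.prod uniform01) (l : ℝ) :
    ∫ ω, expQuantile (resampleBelow γ (U ω) (V ω)) / l ∂P = 1 / l := by
  rw [integral_comp_resampleBelow h0 h1 hU hV hlaw (measurable_expQuantile.div_const l)
    (integrable_expQuantile.div_const l), integral_div, integral_expQuantile]

lemma integral_expQuantile_resampleBelow_div_sq (hV : Measurable V)
    (hlaw : P.map (fun ω => (U ω, V ω)) = uniform01.prod uniform01) (l : ℝ) :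
    ∫ ω, (expQuantile (resampleBelow γ (U ω) (V ω)) / l) ^ 2 ∂P = 2 / l ^ 2 := by
  simp only [div_pow]
  rw [integral_comp_resampleBelow h0 h1 hU hV hlaw
    ((measurable_expQuantile.pow_const 2).div_const _) (integrable_expQuantile_sq.div_const _),
    integral_div, integral_expQuantile_sq]

lemma integral_expQuantile_resampleBelow_div_mul (hVi : Measurable Vi) (hVj : Measurable Vj)
    (hlaw : P.map (fun ω => (U ω, (Vi ω, Vj ω))) = uniform01.prod (uniform01.prod uniform01))
    (l : ℝ) :
    ∫ ω, expQuantile (resampleBelow γ (U ω) (Vi ω)) / l *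
        (expQuantile (resampleBelow γ (U ω) (Vj ω)) / l) ∂P
      = (1 + (1 - γ) * (1 + log (1 - γ) ^ 2 / γ)) / l ^ 2 := by
  simp only [div_mul_div_comm, ← sq]
  rw [integral_div, integral_mul_comp_resampleBelow h0 h1 hU hVi hVj hlaw measurable_expQuantile
    integrable_expQuantile integrable_expQuantile_sq, integral_expQuantile_comp_mul_left h0.ne',
    intervalIntegral_expQuantile_sq, sub_self, integral_log_sq_from_zero (by linarith)]
  congr 1
  field_simp
  ring

end exponential

/-- For exponential marginals `Exp(λ)` (quantile function `u ↦ −ln(1−u)/λ`), the Pearson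
correlation of `X_i^γ` and `X_j^γ` equals `(1−γ)(1 + (ln(1−γ))²/γ)`, independently of `λ`. -/
theorem pearson_exponential {Ω : Type*} [MeasurableSpace Ω] (P : Measure Ω)
    [IsProbabilityMeasure P]
    (l γ : ℝ) (hl : 0 < l) (hγ : γ ∈ Set.Ioo (0 : ℝ) 1)
    (U Vi Vj : Ω → ℝ)
    (hU : Measurable U) (hVi : Measurable Vi) (hVj : Measurable Vj)
    (hUunif : P.map U = volume.restrict (Set.Ioo (0 : ℝ) 1))
    (hViunif : P.map Vi = volume.restrict (Set.Ioo (0 : ℝ) 1))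
    (hVjunif : P.map Vj = volume.restrict (Set.Ioo (0 : ℝ) 1))
    (hindep : ProbabilityTheory.iIndepFun
      (![U, Vi, Vj] : Fin 3 → Ω → ℝ) P)
    (Xi Xj : Ω → ℝ)
    (hXi : ∀ ω, Xi ω = -Real.log (1 - (if U ω ≤ γ then γ * Vi ω else U ω)) / l)
    (hXj : ∀ ω, Xj ω = -Real.log (1 - (if U ω ≤ γ then γ * Vj ω else U ω)) / l) :
    pearson P Xi Xj = (1 - γ) * (1 + (Real.log (1 - γ)) ^ 2 / γ) := by
  obtain ⟨h0, h1⟩ := hγ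
  have hmeas : ∀ k, Measurable (![U, Vi, Vj] k) := by
    intro k
    fin_cases k <;> assumption
  have hlaw_i : P.map (fun ω => (U ω, Vi ω)) = uniform01.prod uniform01 := by
    rw [(hindep.indepFun (show (0 : Fin 3) ≠ 1 by decide)).map_prod_eq_prod_map_map
      hU.aemeasurable hVi.aemeasurable, hUunif, hViunif]
  have hlaw_j : P.map (fun ω => (U ω, Vj ω)) = uniform01.prod uniform01 := by
    rw [(hindep.indepFun (show (0 : Fin 3) ≠ 2 by decide)).map_prod_eq_prod_map_map
      hU.aemeasurable hVj.aemeasurable, hUunif, hVjunif]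
  have hlaw : P.map (fun ω => (U ω, (Vi ω, Vj ω)))
      = uniform01.prod (uniform01.prod uniform01) := by
    rw [(hindep.indepFun_prodMk hmeas 1 2 0 (by decide) (by decide)).symm.map_prod_eq_prod_map_map
      hU.aemeasurable (hVi.prodMk hVj).aemeasurable, hUunif,
      (hindep.indepFun (show (1 : Fin 3) ≠ 2 by decide)).map_prod_eq_prod_map_map
      hVi.aemeasurable hVj.aemeasurable, hViunif, hVjunif]
  obtain rfl : Xi = fun ω => expQuantile (resampleBelow γ (U ω) (Vi ω)) / l := funext hXi
  obtain rfl : Xj = fun ω => expQuantile (resampleBelow γ (U ω) (Vj ω)) / l := funext hXj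
  rw [pearson_eq_of_moments (integral_expQuantile_resampleBelow_div h0 h1 hU hVi hlaw_i l)
    (integral_expQuantile_resampleBelow_div h0 h1 hU hVj hlaw_j l)
    (integral_expQuantile_resampleBelow_div_sq h0 h1 hU hVi hlaw_i l)
    (integral_expQuantile_resampleBelow_div_sq h0 h1 hU hVj hlaw_j l)
    (integral_expQuantile_resampleBelow_div_mul h0 h1 hU hVi hVj hlaw l)
    (by rw [div_pow, one_pow]; gcongr; norm_num)]
  field_simp
  ring
end

section
/- Let μ₁,…,μₙ be probability measures on ℝ, U uniform on (0,1), Yᵢ = F⁻¹_{μᵢ}(U), and f : ℝⁿ → ℝ nondecreasing and left-continuous. Define q(α) = f(F⁻¹_{μ₁}(α),…,F⁻¹_{μₙ}(α)). Then for every α ∈ (0,1), the value at risk of f(Y) at level α equals q(α), i.e., inf{ a ∈ ℝ : P(f(Y) > a) ≤ 1−α } = q(α). -/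
/-!
On `(0,1)` the quantile function is characterised by the Galois connection
`F⁻¹(u) ≤ x ↔ u ≤ F(x)`; hence it is nondecreasing and left-continuous, and so is
`q(u) = f(F⁻¹_{μ₁}(u),…,F⁻¹_{μₙ}(u))`, since `f` is approximated from strictly below.
As `f(Y) = q(U)` with `U` uniform, `P(f(Y) > a)` is the length of the interval
`{u ∈ (0,1) | a < q(u)}`, which is at most `1 − α` exactly when `q(α) ≤ a`.
-/

open MeasureTheory

/-- Left-continuous quantile function `F⁻¹_μ(u) = inf {a : F_μ(a) ≥ u}`. -/
noncomputable def qf (μ : Measure ℝ) (u : ℝ) : ℝ :=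
  sInf {a : ℝ | u ≤ (μ (Set.Iic a)).toReal}

/-- Value at risk at level `α`: `VaR^α(Z) = inf {a : P(Z > a) ≤ 1 − α}`. -/
noncomputable def VaR {Ω : Type*} [MeasurableSpace Ω] (P : Measure Ω)
    (Z : Ω → ℝ) (α : ℝ) : ℝ :=
  sInf {a : ℝ | (P {ω | a < Z ω}).toReal ≤ 1 - α}

open ProbabilityTheory Set Filter Topology

section Quantile

variable {μ : Measure ℝ} {u : ℝ}

lemma sInf_le_cdf_le_iff (hu : u ∈ Ioo 0 1) {x : ℝ} :
    sInf {a | u ≤ cdf μ a} ≤ x ↔ u ≤ cdf μ x := by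
  refine ⟨fun hx => ?_, fun hx => csInf_le ?_ hx⟩
  · have hne : {a | u ≤ cdf μ a}.Nonempty :=
      ((tendsto_cdf_atTop μ).eventually (eventually_ge_nhds hu.2)).exists
    refine ge_of_tendsto (((cdf μ).right_continuous x).mono Ioi_subset_Ici_self) ?_
    filter_upwards [self_mem_nhdsWithin] with y (hy : x < y)
    obtain ⟨a, ha, hay⟩ := exists_lt_of_csInf_lt hne (hx.trans_lt hy)
    exact ha.trans (monotone_cdf μ hay.le)
  · obtain ⟨b, hb⟩ :=
      ((tendsto_cdf_atBot μ).eventually (eventually_lt_nhds hu.1)).exists_forall_of_atBot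
    exact ⟨b, fun a ha => le_of_not_gt fun hab => (hb a hab.le).not_ge ha⟩

variable [IsProbabilityMeasure μ]

lemma qf_le_iff_le_cdf (hu : u ∈ Ioo 0 1) {x : ℝ} : qf μ u ≤ x ↔ u ≤ cdf μ x := by
  simp only [qf, ← measureReal_def, ← cdf_eq_real]
  exact sInf_le_cdf_le_iff hu

lemma monotoneOn_qf : MonotoneOn (qf μ) (Ioo 0 1) := fun _ hu _ hv huv =>
  (qf_le_iff_le_cdf hu).2 (huv.trans ((qf_le_iff_le_cdf hv).1 le_rfl))

lemma eventually_lt_qf {α x : ℝ} (hα : α ∈ Ioo 0 1) (hx : x < qf μ α) :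
    ∀ᶠ β in 𝓝[<] α, x < qf μ β := by
  have hcdf : cdf μ x < α := not_le.1 fun h => hx.not_ge ((qf_le_iff_le_cdf hα).2 h)
  filter_upwards [Ioo_mem_nhdsLT (max_lt hcdf hα.1)] with β hβ
  refine not_le.1 fun h => ?_
  have := (qf_le_iff_le_cdf ⟨(le_max_right _ _).trans_lt hβ.1, hβ.2.trans hα.2⟩).1 h
  exact (le_max_left _ _).not_gt (hβ.1.trans_le this)

end Quantile

lemma exists_lt_apply_of_tendsto_nhdsWithin_lt {ι : Type*} {f : (ι → ℝ) → ℝ}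
    {x : ι → ℝ} (hf : Tendsto f (𝓝[{y | ∀ i, y i < x i}] x) (𝓝 (f x))) {a : ℝ}
    (ha : a < f x) :
    ∃ z, (∀ i, z i < x i) ∧ a < f z := by
  have hcl : x ∈ closure {y : ι → ℝ | ∀ i, y i < x i} := by
    have : {y : ι → ℝ | ∀ i, y i < x i} = univ.pi fun i => Iio (x i) := by ext; simp
    rw [this, closure_pi_set]
    simp
  have := mem_closure_iff_nhdsWithin_neBot.1 hcl
  obtain ⟨z, hz, hfz⟩ :=
    (eventually_mem_nhdsWithin.and (hf.eventually (eventually_gt_nhds ha))).exists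
  exact ⟨z, hz, hfz⟩

lemma measure_preimage_eq_of_map_eq_restrict {Ω α : Type*} [MeasurableSpace Ω]
    [MeasurableSpace α] {P : Measure Ω} {ν : Measure α} {U : Ω → α} (hU : Measurable U)
    {I S : Set α} (hI : MeasurableSet I) (hUI : P.map U = ν.restrict I)
    (hS : MeasurableSet (S ∩ I)) :
    P (U ⁻¹' S) = ν (S ∩ I) := by
  have hS' : NullMeasurableSet S (ν.restrict I) :=
    (nullMeasurableSet_restrict hI.nullMeasurableSet).2 hS.nullMeasurableSet
  rw [← Measure.map_apply₀ hU.aemeasurable (hUI ▸ hS'), hUI, Measure.restrict_apply' hI]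

lemma MonotoneOn.ordConnected_setOf_lt_inter {α β : Type*} [Preorder α] [Preorder β]
    {g : α → β} {I : Set α} (hg : MonotoneOn g I) (hI : I.OrdConnected) (a : β) :
    ({u | a < g u} ∩ I).OrdConnected := by
  refine ⟨fun _ hu _ hv w hw => ?_⟩
  have hwI : w ∈ I := hI.out hu.2 hv.2 hw
  exact ⟨hu.1.trans_le (hg hu.2 hwI hw.1), hwI⟩

lemma VaR_eq_of_forall_le_iff {Ω : Type*} [MeasurableSpace Ω] {P : Measure Ω} {Z : Ω → ℝ}
    {α c : ℝ} (h : ∀ a, P.real {ω | a < Z ω} ≤ 1 - α ↔ c ≤ a) : VaR P Z α = c := by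
  have hset : {a | P.real {ω | a < Z ω} ≤ 1 - α} = Ici c := Set.ext h
  rw [VaR, ← csInf_Ici (a := c), ← hset]
  rfl

lemma VaR_comp_of_map_eq_uniform {Ω : Type*} [MeasurableSpace Ω] {P : Measure Ω} {U : Ω → ℝ}
    (hU : Measurable U) (hUunif : P.map U = volume.restrict (Ioo 0 1)) {g : ℝ → ℝ}
    (hg : MonotoneOn g (Ioo 0 1)) {α : ℝ} (hα : α ∈ Ioo 0 1)
    (hlc : ∀ a < g α, ∃ β ∈ Ioo 0 α, a < g β) :
    VaR P (fun ω => g (U ω)) α = g α := by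
  have hlaw (a : ℝ) : P.real {ω | a < g (U ω)} = volume.real ({u | a < g u} ∩ Ioo 0 1) :=
    congrArg ENNReal.toReal <| measure_preimage_eq_of_map_eq_restrict hU measurableSet_Ioo
      hUunif (hg.ordConnected_setOf_lt_inter ordConnected_Ioo a).measurableSet
  refine VaR_eq_of_forall_le_iff fun a => ?_
  rw [hlaw]
  constructor
  · intro ha
    by_contra! hlt
    obtain ⟨β, hβ, hgβ⟩ := hlc a hlt
    have hsub : Ico β 1 ⊆ {u | a < g u} ∩ Ioo 0 1 := fun u hu =>
      have hu' : u ∈ Ioo 0 1 := ⟨hβ.1.trans_le hu.1, hu.2⟩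
      ⟨hgβ.trans_le (hg ⟨hβ.1, hβ.2.trans hα.2⟩ hu' hu.1), hu'⟩
    have hfin : volume ({u | a < g u} ∩ Ioo 0 1) ≠ ⊤ :=
      measure_ne_top_of_subset inter_subset_right measure_Ioo_lt_top.ne
    have := measureReal_mono hsub hfin
    rw [Real.volume_real_Ico_of_le (hβ.2.trans hα.2).le] at this
    linarith [hβ.2]
  · intro ha
    have hsub : {u | a < g u} ∩ Ioo 0 1 ⊆ Ioo α 1 := fun u hu =>
      ⟨not_le.1 fun hle => (hu.1.trans_le ((hg hu.2 hα hle).trans ha)).false, hu.2.2⟩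
    calc volume.real ({u | a < g u} ∩ Ioo 0 1) ≤ volume.real (Ioo α 1) :=
          measureReal_mono hsub measure_Ioo_lt_top.ne
      _ = 1 - α := Real.volume_real_Ioo_of_le hα.2.le

theorem VaR_comonotone_general {Ω : Type*} [MeasurableSpace Ω] (P : Measure Ω)
    (n : ℕ) (U : Ω → ℝ) (hU : Measurable U)
    (hUunif : P.map U = volume.restrict (Set.Ioo (0 : ℝ) 1))
    (μ : Fin n → ProbabilityMeasure ℝ)
    (f : (Fin n → ℝ) → ℝ) (hf : Monotone f)
    (hlc : ∀ x : Fin n → ℝ,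
      Filter.Tendsto f (nhdsWithin x {y | ∀ i, y i < x i}) (nhds (f x))) :
    ∀ α ∈ Set.Ioo (0 : ℝ) 1,
      VaR P (fun ω => f (fun i => qf (μ i).toMeasure (U ω))) α
        = f (fun i => qf (μ i).toMeasure α) := by
  intro α hα
  set q : ℝ → ℝ := fun u => f fun i => qf (μ i).toMeasure u
  have hq : MonotoneOn q (Ioo 0 1) := fun u hu v hv huv =>
    hf fun i => monotoneOn_qf hu hv huv
  refine VaR_comp_of_map_eq_uniform hU hUunif hq hα fun a ha => ?_
  obtain ⟨z, hz, hfz⟩ := exists_lt_apply_of_tendsto_nhdsWithin_lt (hlc _) ha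
  have hzq : ∀ᶠ β in 𝓝[<] α, ∀ i, z i < qf (μ i).toMeasure β :=
    eventually_all.2 fun i => eventually_lt_qf hα (hz i)
  obtain ⟨β, hβ, hzβ⟩ := (Eventually.and (Ioo_mem_nhdsLT hα.1) hzq).exists
  exact ⟨β, hβ, hfz.trans_le (hf fun i => (hzβ i).le)⟩

/-- For the comonotone vector `Y = (F⁻¹_{μ₁}(U),…,F⁻¹_{μₙ}(U))` and a nondecreasing
left-continuous aggregation function `f`, `VaR^α(f(Y)) = q(α) := f(F⁻¹_{μ₁}(α),…,F⁻¹_{μₙ}(α))`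
for every `α ∈ (0,1)`. -/
theorem VaR_comonotone {Ω : Type*} [MeasurableSpace Ω] (P : Measure Ω)
    [IsProbabilityMeasure P]
    (n : ℕ) (U : Ω → ℝ) (hU : Measurable U)
    (hUunif : P.map U = volume.restrict (Set.Ioo (0 : ℝ) 1))
    (μ : Fin n → ProbabilityMeasure ℝ)
    (f : (Fin n → ℝ) → ℝ) (hf : Monotone f)
    (hlc : ∀ x : Fin n → ℝ,
      Filter.Tendsto f (nhdsWithin x {y | ∀ i, y i < x i}) (nhds (f x))) :
    ∀ α ∈ Set.Ioo (0 : ℝ) 1,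
      VaR P (fun ω => f (fun i => qf (μ i).toMeasure (U ω))) α
        = f (fun i => qf (μ i).toMeasure α) :=
  VaR_comonotone_general P n U hU hUunif μ f hf hlc
end

section
/- Let U be uniform on (0,1), γ ∈ (0,1), μ₁,…,μₙ probability measures on ℝ, X₁,…,Xₙ random variables with Xᵢ ~ μᵢ satisfying: (iii) X₁,…,Xₙ are independent under the conditional probability P^γ(·) = P(·∩{U≤γ})/γ on {U≤γ}; (iv) P({Xᵢ > F⁻¹_{μᵢ}(γ)} ∩ {U≤γ}) = 0 and Xᵢ1_{U>γ} = F⁻¹_{μᵢ}(U)1_{U>γ}. Let f : ℝⁿ → ℝ be nondecreasing and left-continuous, q(α) = f(F⁻¹_{μ₁}(α),…,F⁻¹_{μₙ}(α)). Then for every α ∈ [γ,1), VaR^α_P(f(X)) = q(α). -/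
open MeasureTheory

/-! On `{U > γ}` the vector `X` is the comonotone vector `F⁻¹(U)`, and on `{U ≤ γ}` it lies a.s.
below `F⁻¹(γ) ≤ F⁻¹(α)`; hence `f(X) > q(α)` forces `U > α` a.s., an event of probability `1 - α`.
Conversely, for `a < q(α)` left-continuity of `f` gives `y < F⁻¹(α)` coordinatewise with
`a < f(y)`, and `{X > y}` has probability `> 1 - α`. If `α > γ` it contains `{U > t}` for some
`t < α`. If `α = γ` it contains `{U > γ}` together with `{X > y} ∩ {U ≤ γ}`, which has positive
probability by conditional independence: each factor `{Xᵢ > yᵢ} ∩ {U ≤ γ}` is non-null because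
`P(Xᵢ > yᵢ) > 1 - γ = P(U > γ)`. -/

open Set Filter Topology ProbabilityTheory

section Quantile

variable {μ : Measure ℝ} {u v c : ℝ}

lemma qf_eq_sInf [IsProbabilityMeasure μ] :
    qf μ u = sInf {a | u ≤ cdf μ a} := by
  simp [qf, cdf_eq_real, measureReal_def]

lemma bddBelow_setOf_le_cdf (hu : 0 < u) : BddBelow {a | u ≤ cdf μ a} := by
  obtain ⟨b, hb⟩ := ((tendsto_cdf_atBot μ).eventually (eventually_lt_nhds hu)).exists
  exact ⟨b, fun a ha => le_of_not_gt fun hab => (hb.trans_le' (monotone_cdf μ hab.le)).not_ge ha⟩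

lemma nonempty_setOf_le_cdf (hu : u < 1) : {a | u ≤ cdf μ a}.Nonempty :=
  ((tendsto_cdf_atTop μ).eventually (eventually_gt_nhds hu)).exists.imp fun _ => le_of_lt

lemma qf_le_iff_le_cdf_s13 [IsProbabilityMeasure μ] (hu0 : 0 < u) (hu1 : u < 1) :
    qf μ u ≤ c ↔ u ≤ cdf μ c := by
  refine ⟨fun h => ?_, fun h => qf_eq_sInf.trans_le (csInf_le (bddBelow_setOf_le_cdf hu0) h)⟩
  have hc : ∀ z ∈ Ioi c, u ≤ cdf μ z := fun z hz => by
    obtain ⟨b, hb, hbz⟩ := exists_lt_of_csInf_lt (nonempty_setOf_le_cdf hu1)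
      (qf_eq_sInf.symm.trans_le h |>.trans_lt hz)
    exact hb.trans (monotone_cdf μ hbz.le)
  exact ge_of_tendsto (((cdf μ).right_continuous c).mono Ioi_subset_Ici_self).tendsto
    (eventually_nhdsWithin_of_forall hc)

lemma lt_qf_iff_cdf_lt [IsProbabilityMeasure μ] (hu0 : 0 < u) (hu1 : u < 1) :
    c < qf μ u ↔ cdf μ c < u :=
  not_iff_not.mp (by simpa using qf_le_iff_le_cdf_s13 hu0 hu1)

lemma qf_le_qf [IsProbabilityMeasure μ] (hu0 : 0 < u) (huv : u ≤ v) (hv1 : v < 1) :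
    qf μ u ≤ qf μ v :=
  (qf_le_iff_le_cdf_s13 hu0 (huv.trans_lt hv1)).2 <|
    huv.trans ((qf_le_iff_le_cdf_s13 (hu0.trans_le huv) hv1).1 le_rfl)

end Quantile

lemma VaR_eq_of_le_of_forall_lt {Ω : Type*} [MeasurableSpace Ω] {P : Measure Ω} {Z : Ω → ℝ}
    {α c : ℝ}    (hc : P.real {ω | c < Z ω} ≤ 1 - α) (hlt : ∀ a < c, 1 - α < P.real {ω | a < Z ω}) :
    VaR P Z α = c :=
  IsLeast.csInf_eq ⟨hc, fun _ ha => le_of_not_gt fun hac => (hlt _ hac).not_ge ha⟩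

lemma exists_forall_lt_lt_of_tendsto {ι : Type*} {f : (ι → ℝ) → ℝ} {x : ι → ℝ} {a : ℝ}
    (hf : Tendsto f (𝓝[{y | ∀ i, y i < x i}] x) (𝓝 (f x))) (ha : a < f x) :
    ∃ y, (∀ i, y i < x i) ∧ a < f y := by
  have : (𝓝[{y | ∀ i, y i < x i}] x).NeBot := by
    simpa [Set.pi] using (nhdsWithin_pi_neBot (I := univ) (s := fun i => Iio (x i)) (x := x)).2
      fun _ _ => inferInstance
  exact ((hf.eventually (eventually_gt_nhds ha)).and self_mem_nhdsWithin).exists.imp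
    fun _ h => ⟨h.2, h.1⟩

lemma ProbabilityTheory.iIndepFun.measure_iInter_preimage_pos {Ω ι β : Type*}
    [MeasurableSpace Ω] [MeasurableSpace β] [Fintype ι] {Q : Measure Ω} {X : ι → Ω → β}
    (h : iIndepFun X Q) {s : ι → Set β} (hs : ∀ i, MeasurableSet (s i))
    (hpos : ∀ i, 0 < Q (X i ⁻¹' s i)) : 0 < Q (⋂ i, X i ⁻¹' s i) := by
  have hprod := h.measure_inter_preimage_eq_mul Finset.univ (sets := s) fun i _ => hs i
  simp only [Finset.mem_univ, iInter_true] at hprod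
  exact hprod ▸ CanonicallyOrderedAdd.prod_pos.2 fun i _ => hpos i

lemma measure_inter_pos_of_measure_compl_lt {α : Type*} [MeasurableSpace α] {μ : Measure α}
    {s t : Set α} (h : μ sᶜ < μ t) : 0 < μ (t ∩ s) := by
  refine pos_iff_ne_zero.2 fun h0 => (measure_le_inter_add_sdiff μ t s).not_gt ?_
  rw [h0, zero_add]
  exact (measure_mono fun _ hx => hx.2).trans_lt h

section Uniform

variable {Ω : Type*} [MeasurableSpace Ω] {P : Measure Ω} {U : Ω → ℝ} {β : ℝ}

lemma measure_preimage_Ioo_one (hU : Measurable U)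
    (hUunif : P.map U = volume.restrict (Ioo 0 1)) (hβ : 0 ≤ β) :
    P (U ⁻¹' Ioo β 1) = ENNReal.ofReal (1 - β) := by
  rw [← Measure.map_apply hU measurableSet_Ioo, hUunif, Measure.restrict_apply measurableSet_Ioo,
    Ioo_inter_Ioo, max_eq_left hβ, min_self, Real.volume_Ioo]

lemma measure_preimage_Ioi (hU : Measurable U)
    (hUunif : P.map U = volume.restrict (Ioo 0 1)) (hβ : 0 ≤ β) :
    P (U ⁻¹' Ioi β) = ENNReal.ofReal (1 - β) := by
  rw [← Measure.map_apply hU measurableSet_Ioi, hUunif, Measure.restrict_apply measurableSet_Ioi,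
    Ioi_inter_Ioo, max_eq_left hβ, Real.volume_Ioo]

end Uniform

lemma preimage_Ioo_subset_iInter_preimage_Ioi {Ω ι : Type*} {U : Ω → ℝ} {γ t : ℝ}
    {μ : ι → Measure ℝ} [∀ i, IsProbabilityMeasure (μ i)] {X : ι → Ω → ℝ} {y : ι → ℝ}
    (hagree : ∀ i ω, γ < U ω → X i ω = qf (μ i) (U ω)) (hγt : γ ≤ t)
    (hy : ∀ i, cdf (μ i) (y i) < t) : U ⁻¹' Ioo t 1 ⊆ ⋂ i, X i ⁻¹' Ioi (y i) := by
  rintro ω ⟨htU, hU1⟩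
  refine mem_iInter.2 fun i => ?_
  have hyU : cdf (μ i) (y i) < U ω := (hy i).trans htU
  rw [mem_preimage, hagree i ω (hγt.trans_lt htU)]
  exact (lt_qf_iff_cdf_lt ((cdf_nonneg _ _).trans_lt hyU) hU1).2 hyU

section UpperComonotone

variable {Ω ι : Type*} [MeasurableSpace Ω] {P : Measure Ω} {U : Ω → ℝ} {γ α : ℝ}
  {μ : ι → Measure ℝ} [∀ i, IsProbabilityMeasure (μ i)] {X : ι → Ω → ℝ} {y : ι → ℝ}

lemma measureReal_apply_qf_lt_le_one_sub [Countable ι] [IsFiniteMeasure P] (hU : Measurable U)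
    (hUunif : P.map U = volume.restrict (Ioo 0 1)) (hγ0 : 0 < γ) (hγα : γ ≤ α) (hα1 : α < 1)
    (h0 : ∀ i, P ({ω | qf (μ i) γ < X i ω} ∩ {ω | U ω ≤ γ}) = 0)
    (hagree : ∀ i ω, γ < U ω → X i ω = qf (μ i) (U ω))
    {f : (ι → ℝ) → ℝ} (hf : Monotone f) :
    P.real {ω | f (fun i => qf (μ i) α) < f (fun i => X i ω)} ≤ 1 - α := by
  set N := ⋃ i, {ω | qf (μ i) γ < X i ω} ∩ {ω | U ω ≤ γ}
  have hsub : {ω | f (fun i => qf (μ i) α) < f (fun i => X i ω)} ⊆ N ∪ U ⁻¹' Ioi α := by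
    intro ω hω
    by_contra! hω'
    simp only [N, mem_union, mem_iUnion, mem_inter_iff, mem_ofPred_eq, mem_preimage, mem_Ioi,
      not_or, not_exists, not_and, not_lt] at hω'
    refine hω.not_ge (hf fun i => ?_)
    rcases le_or_gt (U ω) γ with hUγ | hγU
    · exact (le_of_not_gt fun h => hω'.1 i h hUγ).trans (qf_le_qf hγ0 hγα hα1)
    · rw [hagree i ω hγU]
      exact qf_le_qf (hγ0.trans hγU) hω'.2 hα1
  calc P.real {ω | f (fun i => qf (μ i) α) < f (fun i => X i ω)}
      ≤ P.real (N ∪ U ⁻¹' Ioi α) := measureReal_mono hsub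
    _ ≤ P.real N + P.real (U ⁻¹' Ioi α) := measureReal_union_le _ _
    _ = 1 - α := by
      rw [measureReal_def, measure_iUnion_null h0, measureReal_def,
        measure_preimage_Ioi hU hUunif (by linarith), ENNReal.toReal_ofReal (by linarith)]
      simp

lemma one_sub_lt_measureReal_iInter_of_lt [Finite ι] [IsFiniteMeasure P] (hU : Measurable U)
    (hUunif : P.map U = volume.restrict (Ioo 0 1)) (hγ0 : 0 ≤ γ) (hγα : γ < α)
    (hagree : ∀ i ω, γ < U ω → X i ω = qf (μ i) (U ω)) (hy : ∀ i, cdf (μ i) (y i) < α) :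
    1 - α < P.real (⋂ i, X i ⁻¹' Ioi (y i)) := by
  obtain ⟨t, hyt, hγt, htα⟩ : ∃ t, (∀ i, cdf (μ i) (y i) < t) ∧ γ < t ∧ t < α :=
    ((eventually_all.2 fun i => eventually_gt_nhds (hy i)).and (eventually_gt_nhds hγα)
      |>.filter_mono nhdsWithin_le_nhds |>.and self_mem_nhdsWithin).exists (f := 𝓝[<] α)
      |>.imp fun _ h => ⟨h.1.1, h.1.2, h.2⟩
  calc 1 - α < 1 - t := by linarith
    _ ≤ P.real (U ⁻¹' Ioo t 1) := by
      rw [measureReal_def, measure_preimage_Ioo_one hU hUunif (by linarith),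
        ENNReal.toReal_ofReal']
      exact le_max_left _ _
    _ ≤ P.real (⋂ i, X i ⁻¹' Ioi (y i)) :=
      measureReal_mono (preimage_Ioo_subset_iInter_preimage_Ioi hagree hγt.le hyt)

lemma one_sub_lt_measureReal_iInter_of_iIndepFun [Fintype ι] [IsFiniteMeasure P]
    (hU : Measurable U) (hUunif : P.map U = volume.restrict (Ioo 0 1)) (hγ0 : 0 ≤ γ) (hγ1 : γ < 1)
    (hXm : ∀ i, Measurable (X i)) (hXd : ∀ i, P.map (X i) = μ i)
    (hindep : iIndepFun X ((ENNReal.ofReal γ)⁻¹ • P.restrict {ω | U ω ≤ γ}))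
    (hagree : ∀ i ω, γ < U ω → X i ω = qf (μ i) (U ω)) (hy : ∀ i, cdf (μ i) (y i) < γ) :
    1 - γ < P.real (⋂ i, X i ⁻¹' Ioi (y i)) := by
  set C := {ω | U ω ≤ γ}
  set E := ⋂ i, X i ⁻¹' Ioi (y i)
  have hEm : MeasurableSet E := .iInter fun i => hXm i measurableSet_Ioi
  have hCc : P Cᶜ = ENNReal.ofReal (1 - γ) := by
    rw [← measure_preimage_Ioi hU hUunif hγ0]
    congr 1
    ext ω
    simp [C]
  have hXC : ∀ i, 0 < P (X i ⁻¹' Ioi (y i) ∩ C) := fun i => by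
    refine measure_inter_pos_of_measure_compl_lt ?_
    rw [hCc, ← Measure.map_apply (hXm i) measurableSet_Ioi, hXd i, ← compl_Iic,
      prob_compl_eq_one_sub measurableSet_Iic, ← ofReal_cdf, ← ENNReal.ofReal_one,
      ← ENNReal.ofReal_sub _ (cdf_nonneg _ _)]
    exact ENNReal.ofReal_lt_ofReal_iff'.2 ⟨by linarith [hy i], by linarith [hy i]⟩
  have hEC : 0 < P (E ∩ C) := by
    have hQ := hindep.measure_iInter_preimage_pos (fun i => measurableSet_Ioi) fun i => by
      rw [Measure.smul_apply, Measure.restrict_apply (hXm i measurableSet_Ioi), smul_eq_mul]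
      exact ENNReal.mul_pos (ENNReal.inv_ne_zero.2 ENNReal.ofReal_ne_top) (hXC i).ne'
    rw [Measure.smul_apply, Measure.restrict_apply hEm, smul_eq_mul] at hQ
    exact pos_iff_ne_zero.2 (ENNReal.mul_pos_iff.1 hQ).2.ne'
  have hdisj : Disjoint (U ⁻¹' Ioo γ 1) (E ∩ C) :=
    disjoint_left.2 fun _ hA hC => hA.1.not_ge hC.2
  calc 1 - γ < P.real (U ⁻¹' Ioo γ 1) + P.real (E ∩ C) := by
        rw [measureReal_def, measure_preimage_Ioo_one hU hUunif hγ0,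
          ENNReal.toReal_ofReal (by linarith)]
        linarith [show 0 < P.real (E ∩ C) from ENNReal.toReal_pos hEC.ne' (measure_ne_top _ _)]
    _ = P.real (U ⁻¹' Ioo γ 1 ∪ E ∩ C) :=
      (measureReal_union hdisj (hEm.inter (hU measurableSet_Iic))).symm
    _ ≤ P.real E :=
      measureReal_mono (union_subset (preimage_Ioo_subset_iInter_preimage_Ioi hagree le_rfl hy)
        inter_subset_left)

end UpperComonotone

/-- If `X₁,…,Xₙ` with `Xᵢ ~ μᵢ` are conditionally independent on `{U ≤ γ}` (under the
normalized restricted measure), satisfy `P({Xᵢ > F⁻¹_{μᵢ}(γ)} ∩ {U ≤ γ}) = 0`, and agree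
with the comonotone vector `F⁻¹_{μᵢ}(U)` on `{U > γ}`, then for every nondecreasing
left-continuous `f` and every `α ∈ [γ,1)`, `VaR^α_P(f(X)) = q(α)`. -/
theorem VaR_upper_comonotone {Ω : Type*} [MeasurableSpace Ω] (P : Measure Ω)
    [IsProbabilityMeasure P]
    (n : ℕ) (U : Ω → ℝ) (hU : Measurable U)
    (hUunif : P.map U = volume.restrict (Set.Ioo (0 : ℝ) 1))
    (γ : ℝ) (hγ : γ ∈ Set.Ioo (0 : ℝ) 1)
    (μ : Fin n → ProbabilityMeasure ℝ) (X : Fin n → Ω → ℝ)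
    (hXm : ∀ i, Measurable (X i))
    (hXd : ∀ i, P.map (X i) = (μ i).toMeasure)
    (hindep : ProbabilityTheory.iIndepFun X
      ((ENNReal.ofReal γ)⁻¹ • P.restrict {ω | U ω ≤ γ}))
    (h0 : ∀ i, P ({ω | qf (μ i).toMeasure γ < X i ω} ∩ {ω | U ω ≤ γ}) = 0)
    (hagree : ∀ i ω, γ < U ω → X i ω = qf (μ i).toMeasure (U ω))
    (f : (Fin n → ℝ) → ℝ) (hf : Monotone f)
    (hlc : ∀ x : Fin n → ℝ,
      Filter.Tendsto f (nhdsWithin x {y | ∀ i, y i < x i}) (nhds (f x))) :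
    ∀ α ∈ Set.Ico γ 1,
      VaR P (fun ω => f (fun i => X i ω)) α = f (fun i => qf (μ i).toMeasure α) := by
  rintro α ⟨hγα, hα1⟩
  refine VaR_eq_of_le_of_forall_lt
    (measureReal_apply_qf_lt_le_one_sub hU hUunif hγ.1 hγα hα1 h0 hagree hf) fun a ha => ?_
  obtain ⟨y, hy, hay⟩ := exists_forall_lt_lt_of_tendsto (hlc _) ha
  have hcdf : ∀ i, cdf (μ i).toMeasure (y i) < α := fun i =>
    (lt_qf_iff_cdf_lt (hγ.1.trans_le hγα) hα1).1 (hy i)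
  have hE : 1 - α < P.real (⋂ i, X i ⁻¹' Ioi (y i)) := by
    rcases hγα.eq_or_lt with rfl | hγα
    · exact one_sub_lt_measureReal_iInter_of_iIndepFun hU hUunif hγ.1.le hγ.2 hXm hXd hindep
        hagree hcdf
    · exact one_sub_lt_measureReal_iInter_of_lt hU hUunif hγ.1.le hγα hagree hcdf
  exact hE.trans_le <| measureReal_mono fun ω hω =>
    hay.trans_le (hf fun i => (mem_iInter.1 hω i).le)
end
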